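/- The functions I_{2n+k} = λ_k² + (λ_{n+k} + λ_{2n+1} x_k)², k = 1,…,n, are first integrals of the Hamiltonian system with Hamiltonian H = (1/2) Σ_{k=1}^n (1/σ_k)[λ_k² + (λ_{k+n} + x_k λ_{2n+1})²] on T*ℝ^{2n+1} with the canonical Poisson structure. -/

import Mathlib

/-- Phase space `T*ℝ^{2n+1}` with coordinates `(q, λ)`,
`q = (x₁,…,xₙ,y₁,…,yₙ,z)`. -/
abbrev Phase (n : ℕ) := (Fin (2 * n + 1) → ℝ) × (Fin (2 * n + 1) → ℝ)

/-- Index of `x_k` (resp. `λ_k`). -/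
def ix {n : ℕ} (k : Fin n) : Fin (2 * n + 1) := ⟨k.1, by have := k.isLt; omega⟩

/-- Index of `y_k` (resp. `λ_{n+k}`). -/
def iy {n : ℕ} (k : Fin n) : Fin (2 * n + 1) := ⟨k.1 + n, by have := k.isLt; omega⟩

/-- Index of `z` (resp. `λ_{2n+1}`). -/
def iz {n : ℕ} : Fin (2 * n + 1) := ⟨2 * n, by omega⟩

/-- Canonical Poisson bracket
`{f,g} = ∑ᵢ (∂f/∂qᵢ ∂g/∂λᵢ − ∂f/∂λᵢ ∂g/∂qᵢ)`. -/
noncomputable def PB {n : ℕ} (f g : Phase n → ℝ) (z : Phase n) : ℝ :=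
  ∑ i, (fderiv ℝ f z (Pi.single i 1, 0) * fderiv ℝ g z (0, Pi.single i 1)
      - fderiv ℝ f z (0, Pi.single i 1) * fderiv ℝ g z (Pi.single i 1, 0))

/-- The LL Hamiltonian
`H = (1/2) ∑ₖ (1/σₖ)[λₖ² + (λ_{k+n} + xₖ λ_{2n+1})²]`. -/
noncomputable def Ham (n : ℕ) (σ : Fin n → ℝ) (z : Phase n) : ℝ :=
  (1 / 2) * ∑ k, (1 / σ k) *
    ((z.2 (ix k)) ^ 2 + (z.2 (iy k) + z.1 (ix k) * z.2 iz) ^ 2)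


/-!
Writing `Iₖ` for the quadratic integrals, the Hamiltonian is `H = ∑ₖ Iₖ / (2σₖ)`, so by
bilinearity of the bracket it suffices that the `Iₖ` pairwise Poisson-commute. The only position
coordinate `Iₖ` depends on is `xₖ`, and its conjugate momentum `λₖ` occurs in `Iⱼ` only for
`j = k`; hence `{Iₖ, Iⱼ} = 0` for `j ≠ k`, while `{Iₖ, Iₖ} = 0` by antisymmetry.
-/

section PoissonBracket

variable {n : ℕ}

theorem PB_fun_sum_right {ι : Type*} (s : Finset ι) (c : ι → ℝ) (f : Phase n → ℝ)
    (g : ι → Phase n → ℝ) (z : Phase n) (hg : ∀ j ∈ s, DifferentiableAt ℝ (g j) z) :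
    PB f (fun w => ∑ j ∈ s, c j * g j w) z = ∑ j ∈ s, c j * PB f (g j) z := by
  have hderiv : fderiv ℝ (fun w => ∑ j ∈ s, c j * g j w) z = ∑ j ∈ s, c j • fderiv ℝ (g j) z := by
    rw [fderiv_fun_sum fun j hj => (hg j hj).const_mul (c j)]
    exact Finset.sum_congr rfl fun j hj => fderiv_const_mul (hg j hj) (c j)
  simp only [PB, hderiv, FunLike.coe_sum, Finset.sum_apply, FunLike.coe_smul, Pi.smul_apply,
    smul_eq_mul, Finset.mul_sum, ← Finset.sum_sub_distrib]
  rw [Finset.sum_comm]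
  exact Finset.sum_congr rfl fun j _ => Finset.sum_congr rfl fun i _ => by ring

def positionCoord (i : Fin (2 * n + 1)) : Phase n →L[ℝ] ℝ :=
  (ContinuousLinearMap.proj i).comp (ContinuousLinearMap.fst ℝ _ _)

def momentumCoord (i : Fin (2 * n + 1)) : Phase n →L[ℝ] ℝ :=
  (ContinuousLinearMap.proj i).comp (ContinuousLinearMap.snd ℝ _ _)

@[simp]
theorem positionCoord_apply (i : Fin (2 * n + 1)) (w : Phase n) : positionCoord i w = w.1 i :=
  rfl

@[simp]
theorem momentumCoord_apply (i : Fin (2 * n + 1)) (w : Phase n) : momentumCoord i w = w.2 i :=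
  rfl

end PoissonBracket

section QuadraticIntegrals

variable {n : ℕ}

theorem ix_injective : Function.Injective (ix (n := n)) := fun _ _ h =>
  Fin.ext (congrArg Fin.val h :)

theorem ix_ne_iy (j l : Fin n) : ix j ≠ iy l :=
  Fin.ne_of_val_ne (by simp only [ix, iy]; omega)

theorem ix_ne_iz (j : Fin n) : ix j ≠ iz :=
  Fin.ne_of_val_ne (by simp only [ix, iz]; omega)

def quadraticIntegral (k : Fin n) (w : Phase n) : ℝ :=
  w.2 (ix k) ^ 2 + (w.2 (iy k) + w.2 iz * w.1 (ix k)) ^ 2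

theorem hasFDerivAt_quadraticIntegral (k : Fin n) (z : Phase n) :
    HasFDerivAt (quadraticIntegral k)
      ((2 * z.2 (ix k)) • momentumCoord (ix k) + (2 * (z.2 (iy k) + z.2 iz * z.1 (ix k))) •
        (momentumCoord (iy k) + z.2 iz • positionCoord (ix k) + z.1 (ix k) • momentumCoord iz))
      z := by
  have hq (i) := (positionCoord i).hasFDerivAt (x := z)
  have hp (i) := (momentumCoord i).hasFDerivAt (x := z)
  refine HasFDerivAt.congr_fderiv (f := quadraticIntegral k)
    (((hp (ix k)).pow 2).add (((hp (iy k)).add ((hp iz).mul (hq (ix k)))).pow 2)) ?_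
  refine ContinuousLinearMap.ext fun w => ?_
  simp only [momentumCoord_apply, positionCoord_apply, Nat.add_one_sub_one, pow_one, nsmul_eq_mul,
    Nat.cast_ofNat, Pi.add_apply, Pi.mul_apply, smul_add, add_apply,
    smul_apply, smul_eq_mul]
  ring

theorem fderiv_quadraticIntegral_position (k : Fin n) (z : Phase n) (i : Fin (2 * n + 1)) :
    fderiv ℝ (quadraticIntegral k) z (Pi.single i 1, 0) =
      (Pi.single (ix k) (2 * (z.2 (iy k) + z.2 iz * z.1 (ix k)) * z.2 iz) : _ → ℝ) i := by
  simp [(hasFDerivAt_quadraticIntegral k z).fderiv, Pi.single_apply, eq_comm]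

theorem fderiv_quadraticIntegral_momentum_ix (k j : Fin n) (z : Phase n) :
    fderiv ℝ (quadraticIntegral k) z (0, Pi.single (ix j) 1) =
      (Pi.single k (2 * z.2 (ix k)) : _ → ℝ) j := by
  simp [(hasFDerivAt_quadraticIntegral k z).fderiv, Pi.single_apply, ix_injective.eq_iff,
    ix_ne_iy, ix_ne_iz, eq_comm]

theorem PB_quadraticIntegral_quadraticIntegral (k j : Fin n) (z : Phase n) :
    PB (quadraticIntegral k) (quadraticIntegral j) z = 0 := by
  simp only [PB, Finset.sum_sub_distrib, fderiv_quadraticIntegral_position, Pi.single_apply,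
    ite_mul, mul_ite, zero_mul, mul_zero, Finset.sum_ite_eq', Finset.mem_univ, if_true,
    fderiv_quadraticIntegral_momentum_ix]
  rcases eq_or_ne j k with rfl | hjk
  · rw [if_pos rfl, if_pos rfl]
    ring
  · simp [hjk, hjk.symm]

theorem Ham_eq_sum_quadraticIntegral (σ : Fin n → ℝ) :
    Ham n σ = fun w => ∑ j, (2 * σ j)⁻¹ * quadraticIntegral j w := by
  funext w
  simp only [Ham, quadraticIntegral, Finset.mul_sum]
  exact Finset.sum_congr rfl fun j _ => by ring

end QuadraticIntegrals

theorem LL_quadratic_first_integrals_general (n : ℕ) (σ : Fin n → ℝ)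
    (z : Phase n) (k : Fin n) :
    PB (fun w => (w.2 (ix k)) ^ 2 + (w.2 (iy k) + w.2 iz * w.1 (ix k)) ^ 2)
      (Ham n σ) z = 0 := by
  have hdiff (j : Fin n) : DifferentiableAt ℝ (quadraticIntegral j) z :=
    (hasFDerivAt_quadraticIntegral j z).differentiableAt
  rw [Ham_eq_sum_quadraticIntegral, PB_fun_sum_right _ _ _ _ _ fun j _ => hdiff j]
  exact Finset.sum_eq_zero fun j _ =>
    mul_eq_zero_of_right _ (PB_quadraticIntegral_quadraticIntegral k j z)

/-- the quadratic functions
`I_{2n+k} = λₖ² + (λ_{n+k} + λ_{2n+1} xₖ)²`, `k = 1,…,n`, are first integrals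
of the LL Hamiltonian system. -/
theorem LL_quadratic_first_integrals (n : ℕ) (σ : Fin n → ℝ) (hσ : ∀ k, 0 < σ k)
    (z : Phase n) (k : Fin n) :
    PB (fun w => (w.2 (ix k)) ^ 2 + (w.2 (iy k) + w.2 iz * w.1 (ix k)) ^ 2)
      (Ham n σ) z = 0 :=
  LL_quadratic_first_integrals_general n σ z k
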